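/- Weighted quantile inequality for τ-mixing moments: Let ξ be a real random variable with ‖ξ‖_q < ∞ for some q > 2, let Q be the generalized inverse of x ↦ Pr(|ξ| ≥ x), let G be the inverse of x ↦ ∫₀^x Q(u) du, let (τ_k)_{k≥0} be a nonincreasing sequence of nonnegative reals with τ_{k−1} ≤ c k^{-a} for all k ≥ 1, and set H(u) = Σ_{k=0}^∞ 1{2u < τ_k}. Fix r ∈ [2, q) and suppose a is large enough that Σ_{k≥1} k^{(q−1)(r−1)/(q−r) − 1 − a} < ∞. Then ∫₀^{‖ξ‖₁} (H(u) · Q∘G(u))^{r−1} du ≤ C_{q,r,a,c}^{(q−1)/(q−r)} · ‖ξ‖_q^{q(r−1)/(q−1)}, where C_{q,r,a,c} is a finite constant depending only on q, r, a, c. -/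

import Mathlib

open MeasureTheory

noncomputable section

/-- The generalized inverse `Q` of the tail function `x ↦ Pr(|X| ≥ x)`:
`Q(u) = inf {x ≥ 0 : Pr(|X| ≥ x) ≤ u}`. -/
def tailQuantile {Ω : Type*} [MeasurableSpace Ω] (μ : Measure Ω) (X : Ω → ℝ)
    (u : ℝ) : ℝ :=
  sInf {x : ℝ | 0 ≤ x ∧ (μ {ω | x ≤ |X ω|}).toReal ≤ u}

/-- The primitive `x ↦ ∫₀^x Q(u) du` of the quantile function. -/
def quantilePrimitive {Ω : Type*} [MeasurableSpace Ω] (μ : Measure Ω) (X : Ω → ℝ)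
    (x : ℝ) : ℝ :=
  ∫ u in (0 : ℝ)..x, tailQuantile μ X u

/-- The generalized inverse `G` of `x ↦ ∫₀^x Q(u) du`. -/
def quantilePrimitiveInv {Ω : Type*} [MeasurableSpace Ω] (μ : Measure Ω) (X : Ω → ℝ)
    (y : ℝ) : ℝ :=
  sInf {x : ℝ | 0 ≤ x ∧ y ≤ quantilePrimitive μ X x}

/-- The mixing counting function `H(u) = Σ_{k=0}^∞ 1{2u < τ_k}`. -/
def mixCount (τ : ℕ → ℝ) (u : ℝ) : ENNReal :=
  ∑' k : ℕ, if 2 * u < τ k then 1 else 0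

/-!
Markov's inequality gives `Q(v) ≤ ‖ξ‖_q v^{-1/q}`, hence `∫₀^x Q ≤ ‖ξ‖_q q/(q-1) x^{(q-1)/q}`,
which inverts to a lower bound on `G(u)` and so to `Q(G(u)) ≤ C ‖ξ‖_q^{q/(q-1)} u^{-1/(q-1)}`;
by the layer-cake formula `‖ξ‖₁ ≤ ∫₀¹ Q`, so on the range of integration the infimum defining
`G(u)` is over a nonempty set and is not the junk value `sInf ∅ = 0`.
The decay `τ_k ≤ c (k+1)^{-a}` gives `H(u) ≤ 2 (c/(2u))^{1/a}`, and `H` vanishes for `u ≥ c/2`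
because `τ` is nonincreasing. The integrand is thus `O(u^{-γ})` on `(0, c/2]` and zero beyond,
with `γ = (1/a + 1/(q-1))(r-1)`; the summability hypothesis says `a > (q-1)(r-1)/(q-r)`, which is
exactly `γ < 1`.
-/

open Set Filter

section TailQuantile

variable {Ω : Type*} [MeasurableSpace Ω] {μ : Measure Ω} {ξ : Ω → ℝ} {q v x : ℝ}

lemma tailQuantile_nonneg (v : ℝ) : 0 ≤ tailQuantile μ ξ v :=
  Real.sInf_nonneg fun _ hx => hx.1

lemma tailQuantile_le (hx : 0 ≤ x) (h : (μ {ω | x ≤ |ξ ω|}).toReal ≤ v) :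
    tailQuantile μ ξ v ≤ x :=
  csInf_le ⟨0, fun _ hy => hy.1⟩ ⟨hx, h⟩

lemma measure_abs_ge_le_rpow (hq : 0 < q) (hξ : MemLp ξ (ENNReal.ofReal q) μ) (hx : 0 < x) :
    μ {ω | x ≤ |ξ ω|} ≤ ENNReal.ofReal (((eLpNorm ξ (ENNReal.ofReal q) μ).toReal / x) ^ q) := by
  have hmarkov := meas_ge_le_mul_pow_eLpNorm_enorm μ (by simpa using hq) ENNReal.ofReal_ne_top
    hξ.aestronglyMeasurable (ε := ENNReal.ofReal x) (by simpa using hx) (by simp)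
  have hset : {ω | ENNReal.ofReal x ≤ ‖ξ ω‖ₑ} = {ω | x ≤ |ξ ω|} := by
    ext ω
    simp [Real.enorm_eq_ofReal_abs, ENNReal.ofReal_le_ofReal_iff (abs_nonneg _)]
  rw [hset, ENNReal.toReal_ofReal hq.le, ← ENNReal.ofReal_toReal hξ.eLpNorm_ne_top,
    ← ENNReal.ofReal_inv_of_pos hx, ENNReal.ofReal_rpow_of_nonneg (by positivity) hq.le,
    ENNReal.ofReal_rpow_of_nonneg ENNReal.toReal_nonneg hq.le,
    ← ENNReal.ofReal_mul (by positivity)] at hmarkov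
  rwa [div_eq_inv_mul, Real.mul_rpow (by positivity) ENNReal.toReal_nonneg]

lemma measure_abs_ge_toReal_le (hq : 0 < q) (hξ : MemLp ξ (ENNReal.ofReal q) μ) (hv : 0 < v)
    (hx : (eLpNorm ξ (ENNReal.ofReal q) μ).toReal * v ^ (-(1 / q)) < x) :
    (μ {ω | x ≤ |ξ ω|}).toReal ≤ v := by
  set M := (eLpNorm ξ (ENNReal.ofReal q) μ).toReal
  have hx0 : 0 < x := lt_of_le_of_lt (by positivity) hx
  refine ENNReal.toReal_le_of_le_ofReal hv.le ((measure_abs_ge_le_rpow hq hξ hx0).trans ?_)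
  refine ENNReal.ofReal_le_ofReal ?_
  have hMx : M / x ≤ v ^ (1 / q) := by
    rw [div_le_iff₀ hx0]
    calc M = M * v ^ (-(1 / q)) * v ^ (1 / q) := by
          rw [mul_assoc, ← Real.rpow_add hv, neg_add_cancel, Real.rpow_zero, mul_one]
      _ ≤ v ^ (1 / q) * x := by rw [mul_comm _ x]; gcongr
  calc (M / x) ^ q ≤ (v ^ (1 / q)) ^ q := by gcongr
    _ = v := by rw [← Real.rpow_mul hv.le, one_div_mul_cancel hq.ne', Real.rpow_one]

lemma tailQuantile_le_mul_rpow (hq : 0 < q) (hξ : MemLp ξ (ENNReal.ofReal q) μ) (hv : 0 < v) :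
    tailQuantile μ ξ v ≤ (eLpNorm ξ (ENNReal.ofReal q) μ).toReal * v ^ (-(1 / q)) :=
  le_of_forall_gt_imp_ge_of_dense fun x hx =>
    tailQuantile_le (lt_of_le_of_lt (by positivity) hx).le (measure_abs_ge_toReal_le hq hξ hv hx)

lemma nonempty_tailQuantile_set (hq : 0 < q) (hξ : MemLp ξ (ENNReal.ofReal q) μ) (hv : 0 < v) :
    {x : ℝ | 0 ≤ x ∧ (μ {ω | x ≤ |ξ ω|}).toReal ≤ v}.Nonempty :=
  ⟨_, by positivity, measure_abs_ge_toReal_le hq hξ hv (lt_add_one _)⟩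

lemma antitoneOn_tailQuantile (hq : 0 < q) (hξ : MemLp ξ (ENNReal.ofReal q) μ) :
    AntitoneOn (tailQuantile μ ξ) (Ioi 0) := fun _ hv _ _ hvv' =>
  csInf_le_csInf ⟨0, fun _ hx => hx.1⟩ (nonempty_tailQuantile_set hq hξ hv)
    fun _ hx => ⟨hx.1, hx.2.trans hvv'⟩

lemma intervalIntegrable_mul_rpow_neg_inv (hq : 1 < q) (M a b : ℝ) :
    IntervalIntegrable (fun t => M * t ^ (-(1 / q))) volume a b := by
  refine (intervalIntegral.intervalIntegrable_rpow' ?_).const_mul M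
  rw [neg_lt_neg_iff, div_lt_one (by linarith)]
  exact hq

lemma integrableOn_tailQuantile (hq : 1 < q) (hξ : MemLp ξ (ENNReal.ofReal q) μ) (x : ℝ) :
    IntegrableOn (tailQuantile μ ξ) (Ioc 0 x) := by
  have hq0 : 0 < q := by linarith
  have hbound : IntegrableOn (fun t => (eLpNorm ξ (ENNReal.ofReal q) μ).toReal * t ^ (-(1 / q)))
      (Ioc 0 x) := by
    rcases le_total 0 x with hx | hx
    · exact (intervalIntegrable_iff_integrableOn_Ioc_of_le hx).mp
        (intervalIntegrable_mul_rpow_neg_inv hq _ _ _)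
    · simp [Ioc_eq_empty_of_le hx]
  have hmeas : AEMeasurable (tailQuantile μ ξ) (volume.restrict (Ioc 0 x)) :=
    (aemeasurable_restrict_of_antitoneOn measurableSet_Ioi
      (antitoneOn_tailQuantile hq0 hξ)).mono_measure
        (Measure.restrict_mono Ioc_subset_Ioi_self le_rfl)
  refine hbound.mono' hmeas.aestronglyMeasurable ((ae_restrict_iff' measurableSet_Ioc).2 ?_)
  refine Eventually.of_forall fun t ht => ?_
  rw [Real.norm_of_nonneg (tailQuantile_nonneg t)]
  exact tailQuantile_le_mul_rpow hq0 hξ ht.1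

end TailQuantile

section QuantilePrimitive

variable {Ω : Type*} [MeasurableSpace Ω] {μ : Measure Ω} {ξ : Ω → ℝ} {q x : ℝ}

lemma quantilePrimitive_le (hq : 1 < q) (hξ : MemLp ξ (ENNReal.ofReal q) μ) (hx : 0 ≤ x) :
    quantilePrimitive μ ξ x ≤
      (eLpNorm ξ (ENNReal.ofReal q) μ).toReal * (q / (q - 1)) * x ^ ((q - 1) / q) := by
  set M := (eLpNorm ξ (ENNReal.ofReal q) μ).toReal
  have hq0 : 0 < q := by linarith
  have hexp : -(1 / q) + 1 = (q - 1) / q := by field_simp; ring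
  calc quantilePrimitive μ ξ x ≤ ∫ t in (0 : ℝ)..x, M * t ^ (-(1 / q)) := by
        refine intervalIntegral.integral_mono_on_of_le_Ioo hx
          ((intervalIntegrable_iff_integrableOn_Ioc_of_le hx).mpr
            (integrableOn_tailQuantile hq hξ x)) (intervalIntegrable_mul_rpow_neg_inv hq _ _ _)
          fun t ht => tailQuantile_le_mul_rpow hq0 hξ ht.1
    _ = M * (q / (q - 1)) * x ^ ((q - 1) / q) := by
        rw [intervalIntegral.integral_const_mul, integral_rpow (Or.inl (by
          rw [neg_lt_neg_iff, div_lt_one hq0]; exact hq)), hexp,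
          Real.zero_rpow (div_pos (by linarith) hq0).ne', sub_zero]
        field_simp

end QuantilePrimitive

section LayerCake

variable {Ω : Type*} [MeasurableSpace Ω] {μ : Measure Ω} {ξ : Ω → ℝ} {q t x : ℝ}

lemma lt_tailQuantile [IsFiniteMeasure μ] (hq : 0 < q) (hξ : MemLp ξ (ENNReal.ofReal q) μ)
    (ht : 0 < t) (h : ENNReal.ofReal t < μ {ω | x < |ξ ω|}) : x < tailQuantile μ ξ t := by
  set s : ℕ → Set Ω := fun n => {ω | x + 1 / ((n : ℝ) + 1) ≤ |ξ ω|}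
  have hs : Monotone s := fun i j hij ω (hω : x + 1 / ((i : ℝ) + 1) ≤ |ξ ω|) =>
    show x + 1 / ((j : ℝ) + 1) ≤ |ξ ω| from le_trans (by gcongr) hω
  have hunion : ⋃ n, s n = {ω | x < |ξ ω|} := by
    ext ω
    simp only [s, mem_iUnion, mem_ofPred_eq]
    refine ⟨fun ⟨n, hn⟩ => lt_of_lt_of_le (by simp; positivity) hn, fun hω => ?_⟩
    obtain ⟨n, hn⟩ := exists_nat_one_div_lt (sub_pos.2 hω)
    exact ⟨n, by linarith⟩
  -- continuity from below: already some `y = x + 1/(n+1)` has `t < μ {y ≤ |ξ|}`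
  obtain ⟨n, hn⟩ := ((tendsto_measure_iUnion_atTop (μ := μ) hs).eventually
    (lt_mem_nhds (hunion ▸ h))).exists
  refine lt_of_lt_of_le (lt_add_of_pos_right x (by positivity : (0 : ℝ) < 1 / ((n : ℝ) + 1)))
    (le_csInf (nonempty_tailQuantile_set hq hξ ht) fun z ⟨_, hz⟩ => ?_)
  by_contra! hzy
  have hle : μ (s n) ≤ μ {ω | z ≤ |ξ ω|} := measure_mono fun ω hω => hzy.le.trans hω
  exact (hn.trans_le hle).not_ge ((ENNReal.le_ofReal_iff_toReal_le (measure_ne_top _ _) ht.le).2 hz)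

lemma measure_lt_abs_le_volume [IsProbabilityMeasure μ] (hq : 0 < q)
    (hξ : MemLp ξ (ENNReal.ofReal q) μ) (x : ℝ) :
    μ {ω | x < |ξ ω|} ≤ volume.restrict (Ioc 0 1) {t | x < tailQuantile μ ξ t} := by
  set m := (μ {ω | x < |ξ ω|}).toReal
  have hm : m ≤ 1 := ENNReal.toReal_le_of_le_ofReal zero_le_one (by simpa using prob_le_one)
  have hsub : Ioo 0 m ⊆ {t | x < tailQuantile μ ξ t} ∩ Ioc 0 1 := fun t ht =>
    ⟨lt_tailQuantile hq hξ ht.1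
      ((ENNReal.ofReal_lt_iff_lt_toReal ht.1.le (measure_ne_top _ _)).2 ht.2),
      ht.1, ht.2.le.trans hm⟩
  calc μ {ω | x < |ξ ω|} = volume (Ioo 0 m) := by
        rw [Real.volume_Ioo, sub_zero, ENNReal.ofReal_toReal (measure_ne_top _ _)]
    _ ≤ _ := by
        rw [Measure.restrict_apply' measurableSet_Ioc]
        exact measure_mono hsub

lemma integral_abs_le_quantilePrimitive_one [IsProbabilityMeasure μ] (hq : 1 < q)
    (hξ : MemLp ξ (ENNReal.ofReal q) μ) :
    ∫ ω, |ξ ω| ∂μ ≤ quantilePrimitive μ ξ 1 := by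
  have hq0 : 0 < q := by linarith
  have hQ := integrableOn_tailQuantile hq hξ 1
  have hQnonneg : 0 ≤ᵐ[volume.restrict (Ioc 0 1)] tailQuantile μ ξ :=
    Eventually.of_forall tailQuantile_nonneg
  have hlayer : ∫⁻ ω, ENNReal.ofReal |ξ ω| ∂μ ≤
      ∫⁻ t in Ioc 0 1, ENNReal.ofReal (tailQuantile μ ξ t) := by
    rw [lintegral_eq_lintegral_meas_lt μ (Eventually.of_forall fun ω => abs_nonneg (ξ ω))
        hξ.aestronglyMeasurable.aemeasurable.abs,
      lintegral_eq_lintegral_meas_lt _ hQnonneg hQ.aemeasurable]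
    exact lintegral_mono fun x => measure_lt_abs_le_volume hq0 hξ x
  have hint : Integrable (fun ω => |ξ ω|) μ :=
    (hξ.integrable (by simpa using hq.le)).abs
  rw [quantilePrimitive, intervalIntegral.integral_of_le zero_le_one,
    ← ENNReal.ofReal_le_ofReal_iff (setIntegral_nonneg measurableSet_Ioc
      fun t _ => tailQuantile_nonneg t),
    ofReal_integral_eq_lintegral_ofReal hint (Eventually.of_forall fun ω => abs_nonneg _),
    ofReal_integral_eq_lintegral_ofReal hQ hQnonneg]
  exact hlayer

end LayerCake

section QuantilePrimitiveInv

variable {Ω : Type*} [MeasurableSpace Ω] {μ : Measure Ω} [IsProbabilityMeasure μ] {ξ : Ω → ℝ}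
  {q u : ℝ}

lemma eLpNorm_toReal_pos_of_integral_abs_pos (hq : 1 < q) (hξ : MemLp ξ (ENNReal.ofReal q) μ)
    (h : 0 < ∫ ω, |ξ ω| ∂μ) : 0 < (eLpNorm ξ (ENNReal.ofReal q) μ).toReal := by
  have hbound := (integral_abs_le_quantilePrimitive_one hq hξ).trans
    (quantilePrimitive_le hq hξ zero_le_one)
  rw [Real.one_rpow, mul_one] at hbound
  exact pos_of_mul_pos_left (h.trans_le hbound) (div_pos (by linarith) (by linarith)).le

lemma rpow_le_quantilePrimitiveInv (hq : 1 < q) (hξ : MemLp ξ (ENNReal.ofReal q) μ)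
    (hu : 0 < u) (huL : u ≤ ∫ ω, |ξ ω| ∂μ) :
    (u / ((eLpNorm ξ (ENNReal.ofReal q) μ).toReal * (q / (q - 1)))) ^ (q / (q - 1)) ≤
      quantilePrimitiveInv μ ξ u := by
  have hq' : 0 < q / (q - 1) := div_pos (by linarith) (by linarith)
  have hM2 : 0 < (eLpNorm ξ (ENNReal.ofReal q) μ).toReal * (q / (q - 1)) :=
    mul_pos (eLpNorm_toReal_pos_of_integral_abs_pos hq hξ (hu.trans_le huL)) hq'
  refine le_csInf ⟨1, zero_le_one, huL.trans (integral_abs_le_quantilePrimitive_one hq hξ)⟩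
    fun x ⟨hx, hux⟩ => ?_
  have hle : u / ((eLpNorm ξ (ENNReal.ofReal q) μ).toReal * (q / (q - 1))) ≤ x ^ ((q - 1) / q) := by
    rw [div_le_iff₀ hM2, mul_comm]
    exact hux.trans (quantilePrimitive_le hq hξ hx)
  calc _ ≤ (x ^ ((q - 1) / q)) ^ (q / (q - 1)) := by gcongr
    _ = x := by
        rw [← Real.rpow_mul hx, div_mul_div_cancel₀' (by linarith), div_self (by linarith),
          Real.rpow_one]

lemma tailQuantile_quantilePrimitiveInv_le (hq : 1 < q) (hξ : MemLp ξ (ENNReal.ofReal q) μ)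
    (hu : 0 < u) (huL : u ≤ ∫ ω, |ξ ω| ∂μ) :
    tailQuantile μ ξ (quantilePrimitiveInv μ ξ u) ≤
      (q / (q - 1)) ^ (1 / (q - 1)) * (eLpNorm ξ (ENNReal.ofReal q) μ).toReal ^ (q / (q - 1)) *
        u ^ (-(1 / (q - 1))) := by
  set M := (eLpNorm ξ (ENNReal.ofReal q) μ).toReal
  have hq1 : 0 < q - 1 := by linarith
  have hM : 0 < M := eLpNorm_toReal_pos_of_integral_abs_pos hq hξ (hu.trans_le huL)
  have hM2 : 0 < M * (q / (q - 1)) := mul_pos hM (div_pos (by linarith) hq1)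
  have hG := rpow_le_quantilePrimitiveInv hq hξ hu huL
  have hg : 0 < (u / (M * (q / (q - 1)))) ^ (q / (q - 1)) := by positivity
  calc tailQuantile μ ξ (quantilePrimitiveInv μ ξ u)
      ≤ M * quantilePrimitiveInv μ ξ u ^ (-(1 / q)) :=
        tailQuantile_le_mul_rpow (by linarith) hξ (hg.trans_le hG)
    _ ≤ M * ((u / (M * (q / (q - 1)))) ^ (q / (q - 1))) ^ (-(1 / q)) :=
        mul_le_mul_of_nonneg_left
          (Real.rpow_le_rpow_of_nonpos hg hG (neg_nonpos.2 (by positivity))) hM.le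
    _ = M * (M * (q / (q - 1))) ^ (1 / (q - 1)) * u ^ (-(1 / (q - 1))) := by
        rw [← Real.rpow_mul (by positivity), show q / (q - 1) * -(1 / q) = -(1 / (q - 1)) by
          field_simp, Real.div_rpow hu.le hM2.le, Real.rpow_neg hM2.le, div_inv_eq_mul]
        ring
    _ = _ := by
        rw [Real.mul_rpow hM.le (by positivity), show q / (q - 1) = 1 + 1 / (q - 1) by
          field_simp; ring, Real.rpow_add hM, Real.rpow_one]
        ring

end QuantilePrimitiveInv

section MixCount

variable {τ : ℕ → ℝ} {a c u : ℝ}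

lemma mixCount_eq_zero (hτ : Antitone τ) (hu : τ 0 ≤ 2 * u) : mixCount τ u = 0 :=
  ENNReal.tsum_eq_zero.2 fun k => if_neg (not_lt.2 ((hτ k.zero_le).trans hu))

lemma mixCount_le_natCast {n : ℕ} (h : ∀ k, n ≤ k → τ k ≤ 2 * u) : mixCount τ u ≤ n := by
  rw [mixCount, tsum_eq_sum (s := Finset.range n) fun k hk =>
    if_neg (not_lt.2 (h k (by simpa using hk)))]
  calc ∑ k ∈ Finset.range n, (if 2 * u < τ k then (1 : ENNReal) else 0)
      ≤ ∑ _k ∈ Finset.range n, 1 := Finset.sum_le_sum fun k _ => by split_ifs <;> simp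
    _ = n := by simp

lemma mixCount_le_rpow (ha : 0 < a) (hτ : ∀ k : ℕ, τ k ≤ c * ((k : ℝ) + 1) ^ (-a))
    (hu : 0 < u) (huc : 2 * u ≤ c) :
    mixCount τ u ≤ ENNReal.ofReal (2 * (c / 2) ^ (1 / a) * u ^ (-(1 / a))) := by
  have hc : 0 < c := by linarith
  set N := (c / (2 * u)) ^ (1 / a)
  have hN : 1 ≤ N := Real.one_le_rpow ((one_le_div (by positivity)).2 huc) (by positivity)
  have hNa : N ^ a = c / (2 * u) := by
    rw [← Real.rpow_mul (by positivity), one_div_mul_cancel ha.ne', Real.rpow_one]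
  have htail : ∀ k, ⌈N⌉₊ ≤ k → τ k ≤ 2 * u := fun k hk => by
    have hk1 : 0 < (k : ℝ) + 1 := by positivity
    have hNk : N < (k : ℝ) + 1 := (Nat.ceil_le.1 hk).trans_lt (lt_add_one _)
    have hlt : c / (2 * u) < ((k : ℝ) + 1) ^ a := hNa ▸ by gcongr
    refine (hτ k).trans ?_
    rw [Real.rpow_neg hk1.le, ← div_eq_mul_inv, div_le_iff₀ (by positivity)]
    rw [div_lt_iff₀ (by positivity)] at hlt
    linarith
  have hN2 : 2 * N = 2 * (c / 2) ^ (1 / a) * u ^ (-(1 / a)) := by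
    rw [show N = (c / 2 / u) ^ (1 / a) by rw [div_div], Real.div_rpow (by positivity) hu.le,
      Real.rpow_neg hu.le]
    ring
  calc mixCount τ u ≤ ⌈N⌉₊ := mixCount_le_natCast htail
    _ = ENNReal.ofReal ⌈N⌉₊ := (ENNReal.ofReal_natCast _).symm
    _ ≤ ENNReal.ofReal (2 * (c / 2) ^ (1 / a) * u ^ (-(1 / a))) := by
        rw [← hN2]
        exact ENNReal.ofReal_le_ofReal
          ((Nat.ceil_lt_add_one (by positivity)).le.trans (by linarith))

end MixCount

lemma lt_of_summable_nat_add_one_rpow {s a : ℝ}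
    (h : Summable fun k : ℕ => ((k : ℝ) + 1) ^ (s - 1 - a)) : s < a := by
  have := Real.summable_nat_rpow.1 ((summable_nat_add_iff 1).1 (by simpa using h))
  linarith

lemma inv_add_inv_mul_lt_one {q r a : ℝ} (hq : 1 < q) (hr : 1 < r) (hrq : r < q)
    (ha : (q - 1) * (r - 1) / (q - r) < a) : (1 / a + 1 / (q - 1)) * (r - 1) < 1 := by
  have hq1 : 0 < q - 1 := by linarith
  have hr1 : 0 < r - 1 := by linarith
  have hinv : 1 / a < (q - r) / ((q - 1) * (r - 1)) :=
    (one_div_lt_one_div_of_lt (div_pos (by positivity) (by linarith)) ha).trans_eq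
      (one_div_div _ _)
  calc (1 / a + 1 / (q - 1)) * (r - 1)
      < ((q - r) / ((q - 1) * (r - 1)) + 1 / (q - 1)) * (r - 1) := by gcongr
    _ = 1 := by field_simp; ring

lemma setLIntegral_Ioc_mul_rpow_neg {γ b B : ℝ} (hγ : γ < 1) (hb : 0 ≤ b) (hB : 0 ≤ B) :
    ∫⁻ u in Ioc 0 b, ENNReal.ofReal (B * u ^ (-γ)) =
      ENNReal.ofReal (B * (b ^ (1 - γ) / (1 - γ))) := by
  have hint : IntegrableOn (fun u => B * u ^ (-γ)) (Ioc 0 b) :=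
    (intervalIntegrable_iff_integrableOn_Ioc_of_le hb).mp
      ((intervalIntegral.intervalIntegrable_rpow' (by linarith)).const_mul B)
  rw [← ofReal_integral_eq_lintegral_ofReal hint ((ae_restrict_iff' measurableSet_Ioc).2
      (Eventually.of_forall fun u hu => by have := hu.1; positivity)),
    ← intervalIntegral.integral_of_le hb, intervalIntegral.integral_const_mul,
    integral_rpow (Or.inl (by linarith)), Real.zero_rpow (by linarith), sub_zero, neg_add_eq_sub]

lemma mixCount_mul_tailQuantile_rpow_le {Ω : Type*} [MeasurableSpace Ω] {μ : Measure Ω}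
    [IsProbabilityMeasure μ] {ξ : Ω → ℝ} {τ : ℕ → ℝ} {q r a c u : ℝ} (hq : 1 < q) (hr : 1 < r)
    (ha : 0 < a) (hξ : MemLp ξ (ENNReal.ofReal q) μ) (hτ : Antitone τ)
    (hτc : ∀ k : ℕ, τ k ≤ c * ((k : ℝ) + 1) ^ (-a)) (hu : u ∈ Ioc 0 (∫ ω, |ξ ω| ∂μ)) :
    (mixCount τ u * ENNReal.ofReal (tailQuantile μ ξ (quantilePrimitiveInv μ ξ u))) ^ (r - 1) ≤
      (Ioc 0 (c / 2)).indicator (fun u => ENNReal.ofReal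
        ((2 * (c / 2) ^ (1 / a) * (q / (q - 1)) ^ (1 / (q - 1)) *
          (eLpNorm ξ (ENNReal.ofReal q) μ).toReal ^ (q / (q - 1))) ^ (r - 1) *
            u ^ (-((1 / a + 1 / (q - 1)) * (r - 1))))) u := by
  have hu0 : 0 < u := hu.1
  have hq1 : 0 < q - 1 := by linarith
  have hM : 0 ≤ (eLpNorm ξ (ENNReal.ofReal q) μ).toReal := ENNReal.toReal_nonneg
  by_cases huc : u ≤ c / 2
  · have hc : 0 < c := by linarith
    rw [indicator_of_mem (show u ∈ Ioc 0 (c / 2) from ⟨hu.1, huc⟩)]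
    have hH := mixCount_le_rpow ha hτc hu0 (by linarith)
    have hQG := tailQuantile_quantilePrimitiveInv_le hq hξ hu0 hu.2
    calc _ ≤ (ENNReal.ofReal (2 * (c / 2) ^ (1 / a) * u ^ (-(1 / a))) * ENNReal.ofReal
          ((q / (q - 1)) ^ (1 / (q - 1)) * (eLpNorm ξ (ENNReal.ofReal q) μ).toReal ^ (q / (q - 1)) *
            u ^ (-(1 / (q - 1))))) ^ (r - 1) := by
          gcongr
      _ = _ := by
          have hu_pow : u ^ (-((1 / a + 1 / (q - 1)) * (r - 1))) =
              (u ^ (-(1 / a)) * u ^ (-(1 / (q - 1)))) ^ (r - 1) := by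
            rw [← Real.rpow_add hu0, ← Real.rpow_mul hu0.le]
            ring_nf
          rw [← ENNReal.ofReal_mul (by positivity),
            ENNReal.ofReal_rpow_of_nonneg (by positivity) (by linarith), hu_pow,
            ← Real.mul_rpow (by positivity) (by positivity)]
          congr 2
          ring
  · have hτ0 : τ 0 ≤ 2 * u := by
      have := hτc 0
      simp only [CharP.cast_eq_zero, zero_add, Real.one_rpow, mul_one] at this
      linarith
    rw [indicator_of_notMem fun h => huc h.2, mixCount_eq_zero hτ hτ0, zero_mul,
      ENNReal.zero_rpow_of_pos (by linarith)]

lemma setLIntegral_mixCount_mul_tailQuantile_rpow_le {Ω : Type*} [MeasurableSpace Ω]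
    {μ : Measure Ω} [IsProbabilityMeasure μ] {ξ : Ω → ℝ} {τ : ℕ → ℝ} {q r a c : ℝ} (hq : 1 < q)
    (hr : 1 < r) (ha : 0 < a) (hc : 0 ≤ c) (hγ : (1 / a + 1 / (q - 1)) * (r - 1) < 1)
    (hξ : MemLp ξ (ENNReal.ofReal q) μ) (hτ : Antitone τ)
    (hτc : ∀ k : ℕ, τ k ≤ c * ((k : ℝ) + 1) ^ (-a)) :
    ∫⁻ u in Ioc 0 (∫ ω, |ξ ω| ∂μ),
        (mixCount τ u * ENNReal.ofReal (tailQuantile μ ξ (quantilePrimitiveInv μ ξ u))) ^ (r - 1) ≤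
      ENNReal.ofReal ((2 * (c / 2) ^ (1 / a) * (q / (q - 1)) ^ (1 / (q - 1))) ^ (r - 1) *
        ((c / 2) ^ (1 - (1 / a + 1 / (q - 1)) * (r - 1)) /
          (1 - (1 / a + 1 / (q - 1)) * (r - 1))) *
        (eLpNorm ξ (ENNReal.ofReal q) μ).toReal ^ (q * (r - 1) / (q - 1))) := by
  set γ := (1 / a + 1 / (q - 1)) * (r - 1)
  set E := 2 * (c / 2) ^ (1 / a) * (q / (q - 1)) ^ (1 / (q - 1))
  set M := (eLpNorm ξ (ENNReal.ofReal q) μ).toReal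
  have hq1 : 0 < q - 1 := by linarith
  have hE : 0 ≤ E := by positivity
  have hM : 0 ≤ M := ENNReal.toReal_nonneg
  calc _ ≤ ∫⁻ u in Ioc 0 (∫ ω, |ξ ω| ∂μ), (Ioc 0 (c / 2)).indicator
        (fun u => ENNReal.ofReal ((E * M ^ (q / (q - 1))) ^ (r - 1) * u ^ (-γ))) u :=
        setLIntegral_mono' measurableSet_Ioc fun u hu =>
          mixCount_mul_tailQuantile_rpow_le hq hr ha hξ hτ hτc hu
    _ ≤ ∫⁻ u in Ioc 0 (c / 2), ENNReal.ofReal ((E * M ^ (q / (q - 1))) ^ (r - 1) * u ^ (-γ)) :=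
        (setLIntegral_le_lintegral _ _).trans_eq (lintegral_indicator measurableSet_Ioc _)
    _ = _ := by
        rw [setLIntegral_Ioc_mul_rpow_neg hγ (by positivity) (by positivity),
          Real.mul_rpow hE (by positivity), ← Real.rpow_mul hM]
        ring_nf

/-- **Weighted quantile inequality for `τ`-mixing moments.**
For a random variable `ξ` with `‖ξ‖_q < ∞`, `q > 2`, a nonincreasing sequence `(τ_k)`
with `τ_{k−1} ≤ c k^{-a}` and `H(u) = Σ_k 1{2u < τ_k}`, for `r ∈ [2, q)` with
`Σ_{k≥1} k^{(q−1)(r−1)/(q−r) − 1 − a} < ∞`,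
`∫₀^{‖ξ‖₁} (H(u) Q∘G(u))^{r−1} du ≤ C^{(q−1)/(q−r)} ‖ξ‖_q^{q(r−1)/(q−1)}`,
where `C = C_{q,r,a,c}` depends only on `q, r, a, c`. -/
theorem weighted_quantile_inequality (q r a c : ℝ)
    (hq : 2 < q) (hr : 2 ≤ r) (hrq : r < q) (hc : 0 < c)
    (hsum : Summable (fun k : ℕ =>
      ((k : ℝ) + 1) ^ ((q - 1) * (r - 1) / (q - r) - 1 - a))) :
    ∃ C : ℝ, 0 < C ∧
      ∀ (Ω : Type) (_ : MeasurableSpace Ω) (μ : Measure Ω), IsProbabilityMeasure μ →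
      ∀ (ξ : Ω → ℝ) (τ : ℕ → ℝ),
        Measurable ξ →
        MemLp ξ (ENNReal.ofReal q) μ →
        Antitone τ → (∀ k, 0 ≤ τ k) →
        (∀ k : ℕ, 1 ≤ k → τ (k - 1) ≤ c * (k : ℝ) ^ (-a)) →
        (∫⁻ u in Set.Ioc (0 : ℝ) (∫ ω, |ξ ω| ∂μ),
            (mixCount τ u *
              ENNReal.ofReal (tailQuantile μ ξ (quantilePrimitiveInv μ ξ u))) ^
              (r - 1)) ≤
          ENNReal.ofReal (C ^ ((q - 1) / (q - r)) *
            (eLpNorm ξ (ENNReal.ofReal q) μ).toReal ^ (q * (r - 1) / (q - 1))) := by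
  have ha : (q - 1) * (r - 1) / (q - r) < a := lt_of_summable_nat_add_one_rpow hsum
  have ha0 : 0 < a := lt_of_le_of_lt (div_nonneg (by nlinarith) (by linarith)) ha
  have hγ := inv_add_inv_mul_lt_one (by linarith) (by linarith) hrq ha
  set γ := (1 / a + 1 / (q - 1)) * (r - 1)
  set D := (2 * (c / 2) ^ (1 / a) * (q / (q - 1)) ^ (1 / (q - 1))) ^ (r - 1) *
    ((c / 2) ^ (1 - γ) / (1 - γ))
  have hD : 0 < D := by
    have : 0 < q - 1 := by linarith
    have : 0 < 1 - γ := by linarith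
    positivity
  refine ⟨D ^ ((q - r) / (q - 1)), by positivity, fun Ω _ μ _ ξ τ _ hξ hτ _ hτc => ?_⟩
  rw [← Real.rpow_mul hD.le, div_mul_div_cancel₀ (by linarith : q - 1 ≠ 0),
    div_self (by linarith : q - r ≠ 0), Real.rpow_one]
  exact setLIntegral_mixCount_mul_tailQuantile_rpow_le (by linarith) (by linarith) ha0 hc.le hγ hξ
    hτ fun k => by simpa using hτc (k + 1) k.succ_pos

end
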